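/- Let a ∈ ℝ and define u(t) = 1 + (a/2)t and v(t) = 1 for t ∈ ℝ. Then u(0) = v(0) = 1, and for every t ∈ ℝ with u(t) ≠ 0 one has u'(t) = (a/4)(1/v(t)⁴ + v(t)⁴) and v'(t) = (a/4)(1/(u(t)·v(t)³) − v(t)⁵/u(t)). Hence (u, v) solves the evolution ODE system of Section 4 with initial condition u(0) = v(0) = 1. -/

import Mathlib

noncomputable section

/-- The function `u(t) = 1 + (a/2)t`. -/
def uu (a : ℝ) (t : ℝ) : ℝ := 1 + (a / 2) * t

/-- The function `v(t) = 1`. -/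
def vv (t : ℝ) : ℝ := 1

/-- `u(t) = 1 + (a/2)t`, `v(t) = 1` satisfy `u(0) = v(0) = 1` and, at
every `t` with `u(t) ≠ 0`, the evolution ODE system
`u' = (a/4)(1/v⁴ + v⁴)`, `v' = (a/4)(1/(uv³) - v⁵/u)` of Section 4. -/
theorem uv_solves_evolution (a : ℝ) :
    uu a 0 = 1 ∧ vv 0 = 1 ∧
    ∀ t : ℝ, uu a t ≠ 0 →
      HasDerivAt (uu a) ((a / 4) * (1 / (vv t) ^ 4 + (vv t) ^ 4)) t ∧
      HasDerivAt vv ((a / 4) * (1 / (uu a t * (vv t) ^ 3) - (vv t) ^ 5 / uu a t)) t := by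
  refine ⟨by simp [uu], rfl, fun t ht => ⟨?_, ?_⟩⟩
  · have h : HasDerivAt (uu a) (a / 2) t := by
      exact ((hasDerivAt_const t (1:ℝ)).add ((hasDerivAt_id t).const_mul (a/2))).congr_deriv (by ring)
    convert h using 1
    simp [vv]; ring
  · have h : HasDerivAt vv 0 t := hasDerivAt_const t 1
    convert h using 1
    simp [vv]
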